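/- Assume the identity Σ_ρ 1/ρ = 1 + γ/2 − (1/2)·log(4π), where Σ_ρ denotes the symmetric limit lim_{T→∞} Σ_{ρ : |Im ρ| < T} over the non-trivial zeros ρ of the Riemann zeta function ζ(s) (those with 0 < Re ρ < 1), counted with multiplicity. Then the Riemann Hypothesis (every non-trivial zero ρ of ζ has Re ρ = 1/2) holds if and only if Σ_ρ 1/|ρ|² = 2 + γ − log(4π), where this last series converges absolutely. -/

import Mathlib

open Complex Filter Polynomial Topology
open scoped Classical

noncomputable section

/-- The multiplicity (order of vanishing) of `f` at `ρ`. -/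
def zeroMultiplicity (f : ℂ → ℂ) (ρ : ℂ) : ℕ :=
  if h : AnalyticAt ℂ f ρ then (analyticOrderAt f ρ).toNat else 0

/-- `ρ` is a non-trivial zero of the Riemann zeta function. -/
def IsNontrivialZetaZero (ρ : ℂ) : Prop :=
  riemannZeta ρ = 0 ∧ 0 < ρ.re ∧ ρ.re < 1

/-- The symmetric limit `lim_{T→∞} Σ_{|Im ρ|<T} mult(ρ) • g(ρ)` over the nontrivial
zeros of zeta, counted with multiplicity, has value `v`. -/
def HasZetaZeroSum (g : ℂ → ℂ) (v : ℂ) : Prop :=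
  Tendsto (fun T : ℝ =>
      ∑' ρ : {ρ : ℂ // IsNontrivialZetaZero ρ ∧ |ρ.im| < T},
        (zeroMultiplicity riemannZeta ρ : ℂ) * g ρ) atTop (𝓝 v)

/-- An extended Baker period: an element of the `ℚ̄`-span of `1` together with
logarithms of non-zero algebraic numbers. -/
def ExtendedBakerPeriod (z : ℂ) : Prop :=
  ∃ (n : ℕ) (c : Fin n → ℂ) (a : Fin n → ℂ) (b : ℂ),
    IsAlgebraic ℚ b ∧ (∀ i, IsAlgebraic ℚ (c i)) ∧
    (∀ i, IsAlgebraic ℚ (a i) ∧ a i ≠ 0) ∧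
    z = b + ∑ i, c i * Complex.log (a i)

/-- Schanuel's conjecture: if `a₁,…,aₙ` are `ℚ`-linearly independent complex numbers
then among `a₁,…,aₙ, e^{a₁},…,e^{aₙ}` one can find `n` algebraically independent numbers
(equivalently, the transcendence degree of the field they generate is at least `n`). -/
def SchanuelConjecture : Prop :=
  ∀ (n : ℕ) (a : Fin n → ℂ), LinearIndependent ℚ a →
    ∃ g : Fin n → ℂ,
      (∀ i, g i ∈ Set.range a ∪ Set.range fun i => Complex.exp (a i)) ∧
      AlgebraicIndependent ℚ g

end

open Complex Filter Polynomial Topology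

/-!
Write `ρ = σ + it` and `m(ρ)` for the multiplicity. Since `0 ≤ Re(1/ρ) = σ/|ρ|² ≤ 1/|ρ|²`,
absolute convergence of `Σ m/|ρ|²` lets the symmetric limit be taken in real parts, so
`Σ m Re(1/ρ) = 1 + γ/2 - log(4π)/2`. The claimed value of `Σ m/|ρ|²` is therefore
equivalent to `Σ m (2σ - 1)/|ρ|² = 0`, since `2 Re(1/ρ) - 1/|ρ|² = (2σ - 1)/|ρ|²`.
Under RH every term vanishes. Conversely, `Λ(1 - s) = Λ(s)` makes `ρ ↦ 1 - ρ` a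
multiplicity-preserving involution of the non-trivial zeros, and the terms at `ρ` and
`1 - ρ` add up to `-m (2σ - 1)²/(|ρ|² |1 - ρ|²) ≤ 0`; a sum of non-positive numbers
vanishes only if each of them does.
-/

lemma zeroMultiplicity_eq_analyticOrderNatAt (f : ℂ → ℂ) (z : ℂ) :
    zeroMultiplicity f z = analyticOrderNatAt f z := by
  unfold zeroMultiplicity analyticOrderNatAt
  split_ifs with hf
  · rfl
  · simp [analyticOrderAt_of_not_analyticAt hf]

lemma tendsto_tsum_subtype_and_abs_lt {α G : Type*} [NormedAddCommGroup G] [CompleteSpace G]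
    {p : α → Prop} (g : α → ℝ) {f : α → G}
    (hf : Summable fun x : {x // p x} => ‖f x‖) :
    Tendsto (fun T : ℝ => ∑' x : {x // p x ∧ |g x| < T}, f x) atTop
      (𝓝 (∑' x : {x // p x}, f x)) := by
  have hcut : ∀ T : ℝ, ∑' x : {x // p x ∧ |g x| < T}, f x =
      ∑' x : {x // p x}, {y : {x // p x} | |g y| < T}.indicator (fun y => f y) x := fun T => by
    rw [← tsum_subtype {y : {x // p x} | |g y| < T} (fun y => f y),
      ← (Equiv.subtypeSubtypeEquivSubtypeInter p _).tsum_eq]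
    rfl
  simp only [hcut]
  refine tendsto_tsum_of_dominated_convergence hf (fun x => ?_)
    (Eventually.of_forall fun T x => norm_indicator_le_norm_self _ x)
  refine tendsto_const_nhds.congr' ?_
  filter_upwards [eventually_gt_atTop |g x|] with T hT
  simp [hT]

lemma add_apply_eq_zero_of_tsum_eq_zero {ι : Type*} (e : Equiv.Perm ι) {f : ι → ℝ}
    (hf : Summable f) (h0 : ∑' x, f x = 0) (hle : ∀ x, f x + f (e x) ≤ 0) (x : ι) :
    f x + f (e x) = 0 := by
  have hsum : HasSum (fun x => -(f x + f (e x))) 0 := by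
    simpa [h0] using (hf.hasSum.add ((e.hasSum_iff).mpr hf.hasSum)).neg
  exact neg_eq_zero.mp
    (congrFun ((hasSum_zero_iff_of_nonneg fun x => neg_nonneg.mpr (hle x)).mp hsum) x)

lemma analyticAt_riemannZeta {s : ℂ} (hs : s ≠ 1) : AnalyticAt ℂ riemannZeta s :=
  analyticAt_iff_eventually_differentiableAt.mpr <|
    (isOpen_ne.eventually_mem hs).mono fun _ hz => differentiableAt_riemannZeta hz

lemma analyticAt_completedRiemannZeta {s : ℂ} (h0 : s ≠ 0) (h1 : s ≠ 1) :
    AnalyticAt ℂ completedRiemannZeta s :=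
  analyticAt_iff_eventually_differentiableAt.mpr <| by
    filter_upwards [isOpen_ne.eventually_mem h0, isOpen_ne.eventually_mem h1] with z hz0 hz1
    exact differentiableAt_completedZeta hz0 hz1

lemma analyticOrderAt_riemannZeta_ne_top {s : ℂ} (hs : s ≠ 1) :
    analyticOrderAt riemannZeta s ≠ ⊤ := by
  refine AnalyticOnNhd.analyticOrderAt_ne_top_of_isPreconnected (x := 2)
    (fun z hz => analyticAt_riemannZeta hz)
    (isConnected_compl_singleton_of_one_lt_rank (by simp) _).isPreconnected
    (show (2 : ℂ) ≠ 1 by norm_num) hs ?_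
  rw [(analyticAt_riemannZeta (by norm_num)).analyticOrderAt_eq_zero.mpr
    (riemannZeta_ne_zero_of_one_lt_re (by norm_num))]
  exact ENat.zero_ne_top

lemma analyticOrderAt_completedRiemannZeta_one_sub (s : ℂ) :
    analyticOrderAt completedRiemannZeta (1 - s) = analyticOrderAt completedRiemannZeta s := by
  have h := analyticOrderAt_comp_of_deriv_ne_zero (f := completedRiemannZeta)
    (g := fun z : ℂ => 1 - z) (z₀ := 1 - s) (by fun_prop) (by simp)
  rwa [show completedRiemannZeta ∘ (fun z => 1 - z) = completedRiemannZeta from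
    funext completedRiemannZeta_one_sub, sub_sub_cancel] at h

lemma analyticOrderAt_riemannZeta_eq_completed {s : ℂ} (hs : 0 < s.re) (hs1 : s ≠ 1) :
    analyticOrderAt riemannZeta s = analyticOrderAt completedRiemannZeta s := by
  have hs0 : s ≠ 0 := by rintro rfl; simp at hs
  have hζ : riemannZeta =ᶠ[𝓝 s] completedRiemannZeta * fun z => (Gammaℝ z)⁻¹ := by
    filter_upwards [isOpen_ne.eventually_mem hs0] with z hz
    rw [riemannZeta_def_of_ne_zero hz, div_eq_mul_inv, Pi.mul_apply]
  have hΓ : AnalyticAt ℂ (fun z => (Gammaℝ z)⁻¹) s :=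
    differentiable_Gammaℝ_inv.analyticAt s
  rw [analyticOrderAt_congr hζ, analyticOrderAt_mul (analyticAt_completedRiemannZeta hs0 hs1) hΓ,
    hΓ.analyticOrderAt_eq_zero.mpr (inv_ne_zero (Gammaℝ_ne_zero_of_re_pos hs)), add_zero]

lemma analyticOrderAt_riemannZeta_one_sub {s : ℂ} (h0 : 0 < s.re) (h1 : s.re < 1) :
    analyticOrderAt riemannZeta (1 - s) = analyticOrderAt riemannZeta s := by
  have hne : ∀ z : ℂ, z.re < 1 → z ≠ 1 := fun z hz h => by simp [h] at hz
  rw [analyticOrderAt_riemannZeta_eq_completed (by simpa) (hne _ (by simpa)),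
    analyticOrderAt_completedRiemannZeta_one_sub,
    analyticOrderAt_riemannZeta_eq_completed h0 (hne _ h1)]

lemma zeroMultiplicity_riemannZeta_one_sub {s : ℂ} (h0 : 0 < s.re) (h1 : s.re < 1) :
    zeroMultiplicity riemannZeta (1 - s) = zeroMultiplicity riemannZeta s := by
  simp only [zeroMultiplicity_eq_analyticOrderNatAt, analyticOrderNatAt,
    analyticOrderAt_riemannZeta_one_sub h0 h1]

namespace IsNontrivialZetaZero

variable {ρ : ℂ}

lemma ne_zero (hρ : IsNontrivialZetaZero ρ) : ρ ≠ 0 := by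
  rintro rfl; simpa using hρ.2.1

lemma ne_one (hρ : IsNontrivialZetaZero ρ) : ρ ≠ 1 := by
  rintro rfl; simpa using hρ.2.2

lemma analyticOrderAt_ne_zero (hρ : IsNontrivialZetaZero ρ) :
    analyticOrderAt riemannZeta ρ ≠ 0 :=
  _root_.analyticOrderAt_ne_zero.mpr ⟨analyticAt_riemannZeta hρ.ne_one, hρ.1⟩

lemma one_sub (hρ : IsNontrivialZetaZero ρ) : IsNontrivialZetaZero (1 - ρ) := by
  refine ⟨apply_eq_zero_of_analyticOrderAt_ne_zero ?_, by simpa using hρ.2.2,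
    by simpa using hρ.2.1⟩
  rw [analyticOrderAt_riemannZeta_one_sub hρ.2.1 hρ.2.2]
  exact hρ.analyticOrderAt_ne_zero

lemma zeroMultiplicity_pos (hρ : IsNontrivialZetaZero ρ) :
    0 < zeroMultiplicity riemannZeta ρ := by
  rw [zeroMultiplicity_eq_analyticOrderNatAt, analyticOrderNatAt, Nat.pos_iff_ne_zero,
    Ne, ENat.toNat_eq_zero, not_or]
  exact ⟨hρ.analyticOrderAt_ne_zero, analyticOrderAt_riemannZeta_ne_top hρ.ne_one⟩

lemma abs_re_inv_le (hρ : IsNontrivialZetaZero ρ) : |(1 / ρ).re| ≤ 1 / ‖ρ‖ ^ 2 := by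
  rw [one_div, inv_re, Complex.sq_norm,
    abs_of_nonneg (div_nonneg hρ.2.1.le (normSq_nonneg ρ))]
  exact div_le_div_of_nonneg_right hρ.2.2.le (normSq_nonneg ρ)

end IsNontrivialZetaZero

local notation "𝒵" => {ρ : ℂ // IsNontrivialZetaZero ρ}

noncomputable def nontrivialZetaZeroReflection : Equiv.Perm 𝒵 :=
  Function.Involutive.toPerm (fun ρ => ⟨1 - ρ, ρ.2.one_sub⟩)
    fun ρ => Subtype.ext (sub_sub_cancel 1 (ρ : ℂ))

lemma HasZetaZeroSum.tsum_re_eq {g : ℂ → ℂ} {v : ℂ} (h : HasZetaZeroSum g v)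
    (hg : ∀ T : ℝ, Summable fun ρ : {ρ : ℂ // IsNontrivialZetaZero ρ ∧ |ρ.im| < T} =>
      (zeroMultiplicity riemannZeta ρ : ℂ) * g ρ)
    (hre : Summable fun ρ : 𝒵 => ‖(zeroMultiplicity riemannZeta ρ : ℝ) * (g ρ).re‖) :
    ∑' ρ : 𝒵, (zeroMultiplicity riemannZeta ρ : ℝ) * (g ρ).re = v.re := by
  refine tendsto_nhds_unique (tendsto_tsum_subtype_and_abs_lt
    (f := fun ρ => (zeroMultiplicity riemannZeta ρ : ℝ) * (g ρ).re) im hre) ?_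
  refine ((continuous_re.tendsto v).comp h).congr fun T => ?_
  rw [Function.comp_apply, re_tsum (hg T)]
  simp only [mul_re, natCast_re, natCast_im, zero_mul, sub_zero]

lemma summable_zeroMultiplicity_mul_inv_of_abs_im_lt
    (hsum : Summable fun ρ : 𝒵 =>
      (zeroMultiplicity riemannZeta ρ : ℝ) * (1 / ‖(ρ : ℂ)‖ ^ 2))
    (T : ℝ) :
    Summable fun ρ : {ρ : ℂ // IsNontrivialZetaZero ρ ∧ |ρ.im| < T} =>
      (zeroMultiplicity riemannZeta ρ : ℂ) * (1 / ρ) := by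
  have hinj : Function.Injective
      (Subtype.map id fun ρ (hρ : IsNontrivialZetaZero ρ ∧ |ρ.im| < T) => hρ.1) :=
    Subtype.map_injective _ Function.injective_id
  refine ((hsum.comp_injective hinj).mul_left (1 + T)).of_norm_bounded fun ⟨ρ, hρ, hT⟩ => ?_
  have hpos : 0 < ‖ρ‖ := norm_pos_iff.mpr hρ.ne_zero
  have hle : ‖ρ‖ ≤ 1 + T := (norm_le_abs_re_add_abs_im ρ).trans <| by
    rw [abs_of_pos hρ.2.1]; linarith [hρ.2.2]
  have hinv : ‖ρ‖⁻¹ ≤ (1 + T) * (1 / ‖ρ‖ ^ 2) := by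
    rw [mul_one_div, le_div_iff₀ (by positivity), sq, ← mul_assoc, inv_mul_cancel₀ hpos.ne']
    linarith
  simpa [Subtype.map, mul_left_comm] using
    mul_le_mul_of_nonneg_left hinv (Nat.cast_nonneg (zeroMultiplicity riemannZeta ρ))

noncomputable def criticalLineDefect (ρ : ℂ) : ℝ := (2 * ρ.re - 1) / normSq ρ

lemma criticalLineDefect_eq_two_mul_re_inv_sub (ρ : ℂ) :
    criticalLineDefect ρ = 2 * (1 / ρ).re - 1 / ‖ρ‖ ^ 2 := by
  rw [criticalLineDefect, one_div, inv_re, Complex.sq_norm]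
  ring

lemma criticalLineDefect_add_one_sub {ρ : ℂ} (h0 : ρ ≠ 0) (h1 : ρ ≠ 1) :
    criticalLineDefect ρ + criticalLineDefect (1 - ρ) =
      -(2 * ρ.re - 1) ^ 2 / (normSq ρ * normSq (1 - ρ)) := by
  have hN : normSq ρ ≠ 0 := normSq_eq_zero.not.mpr h0
  have hN' : normSq (1 - ρ) ≠ 0 := normSq_eq_zero.not.mpr (sub_ne_zero.mpr h1.symm)
  have hdiff : normSq (1 - ρ) - normSq ρ = 1 - 2 * ρ.re := by
    simp only [normSq_apply, sub_re, sub_im, one_re, one_im]; ring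
  rw [criticalLineDefect, criticalLineDefect, div_add_div _ _ hN hN', sub_re, one_re]
  congr 1
  linear_combination (2 * ρ.re - 1) * hdiff

lemma IsNontrivialZetaZero.zeroMultiplicity_mul_criticalLineDefect_add_one_sub {ρ : ℂ}
    (hρ : IsNontrivialZetaZero ρ) :
    (zeroMultiplicity riemannZeta ρ : ℝ) * criticalLineDefect ρ +
      (zeroMultiplicity riemannZeta (1 - ρ) : ℝ) * criticalLineDefect (1 - ρ) =
      -((zeroMultiplicity riemannZeta ρ : ℝ) *
        ((2 * ρ.re - 1) ^ 2 / (normSq ρ * normSq (1 - ρ)))) := by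
  rw [zeroMultiplicity_riemannZeta_one_sub hρ.2.1 hρ.2.2, ← mul_add,
    criticalLineDefect_add_one_sub hρ.ne_zero hρ.ne_one, neg_div, mul_neg]

theorem riemannHypothesis_iff_tsum_criticalLineDefect_eq_zero
    (hs : Summable fun ρ : 𝒵 =>
      (zeroMultiplicity riemannZeta ρ : ℝ) * criticalLineDefect ρ) :
    (∀ ρ : ℂ, IsNontrivialZetaZero ρ → ρ.re = 1 / 2) ↔
      ∑' ρ : 𝒵, (zeroMultiplicity riemannZeta ρ : ℝ) * criticalLineDefect ρ = 0 := by
  constructor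
  · intro hRH
    refine (tsum_congr fun ρ => ?_).trans tsum_zero
    simp [criticalLineDefect, hRH ρ ρ.2]
  · intro h0 ρ hρ
    have hpair := add_apply_eq_zero_of_tsum_eq_zero nontrivialZetaZeroReflection hs h0
      (fun ρ => by
        rw [show nontrivialZetaZeroReflection ρ = ⟨1 - ρ, ρ.2.one_sub⟩ from rfl,
          ρ.2.zeroMultiplicity_mul_criticalLineDefect_add_one_sub, neg_nonpos]
        exact mul_nonneg (Nat.cast_nonneg _)
          (div_nonneg (sq_nonneg _) (mul_nonneg (normSq_nonneg _) (normSq_nonneg _))))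
      ⟨ρ, hρ⟩
    rw [show nontrivialZetaZeroReflection ⟨ρ, hρ⟩ = ⟨1 - ρ, hρ.one_sub⟩ from rfl,
      hρ.zeroMultiplicity_mul_criticalLineDefect_add_one_sub, neg_eq_zero,
      mul_eq_zero, div_eq_zero_iff, pow_eq_zero_iff two_ne_zero] at hpair
    rcases hpair with hm | hσ | hN
    · exact absurd hm (Nat.cast_ne_zero.mpr hρ.zeroMultiplicity_pos.ne')
    · linarith
    · exact absurd hN (mul_ne_zero (normSq_eq_zero.not.mpr hρ.ne_zero)
        (normSq_eq_zero.not.mpr hρ.one_sub.ne_zero))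

/-- Assuming `Σ_ρ 1/ρ = 1 + γ/2 − (1/2)log(4π)` (symmetric limit over nontrivial
zeros with multiplicity), the Riemann Hypothesis holds iff
`Σ_ρ 1/|ρ|² = 2 + γ − log(4π)`. -/
theorem rh_iff_sum_inv_abs_sq
    (h : HasZetaZeroSum (fun ρ => 1 / ρ)
      (((1 : ℝ) + Real.eulerMascheroniConstant / 2 - Real.log (4 * Real.pi) / 2 : ℝ) : ℂ))
    (hsum : Summable (fun ρ : {ρ : ℂ // IsNontrivialZetaZero ρ} =>
      (zeroMultiplicity riemannZeta ρ : ℝ) * (1 / ‖(ρ : ℂ)‖ ^ 2))) :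
    (∀ ρ : ℂ, IsNontrivialZetaZero ρ → ρ.re = 1 / 2) ↔
      (∑' ρ : {ρ : ℂ // IsNontrivialZetaZero ρ},
          (zeroMultiplicity riemannZeta ρ : ℝ) * (1 / ‖(ρ : ℂ)‖ ^ 2))
        = 2 + Real.eulerMascheroniConstant - Real.log (4 * Real.pi) := by
  set m : 𝒵 → ℝ := fun ρ => (zeroMultiplicity riemannZeta ρ : ℝ)
  have hre_norm : Summable fun ρ : 𝒵 => ‖m ρ * (1 / (ρ : ℂ)).re‖ :=
    hsum.of_nonneg_of_le (fun _ => norm_nonneg _) fun ρ => by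
      rw [norm_mul, Real.norm_natCast, Real.norm_eq_abs]
      exact mul_le_mul_of_nonneg_left ρ.2.abs_re_inv_le (Nat.cast_nonneg _)
  have hre : ∑' ρ : 𝒵, m ρ * (1 / (ρ : ℂ)).re =
      1 + Real.eulerMascheroniConstant / 2 - Real.log (4 * Real.pi) / 2 := by
    simpa using h.tsum_re_eq (summable_zeroMultiplicity_mul_inv_of_abs_im_lt hsum) hre_norm
  have hsplit : ∀ ρ : 𝒵, m ρ * criticalLineDefect ρ =
      2 * (m ρ * (1 / (ρ : ℂ)).re) - m ρ * (1 / ‖(ρ : ℂ)‖ ^ 2) := fun ρ => by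
    rw [criticalLineDefect_eq_two_mul_re_inv_sub]; ring
  have hr := hre_norm.of_norm.mul_left 2
  rw [riemannHypothesis_iff_tsum_criticalLineDefect_eq_zero
      ((hr.sub hsum).congr fun ρ => (hsplit ρ).symm),
    tsum_congr hsplit, hr.tsum_sub hsum, tsum_mul_left, hre]
  constructor <;> intro <;> linarith
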